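/- arXiv:math/0601528 — 2 statements merged into one kernel-verified Lean document; each statement's English description precedes it below -/
import Mathlib

section
/- Let V be a real vector space of dimension 2m (with m ≥ 1) and let ω be a nondegenerate alternating bilinear form on V, regarded as an element of Λ²V*. Then for every integer k with k ≥ m-1, the linear map ε(ω) : Λ^k V* → Λ^{k+2} V* given by exterior multiplication α ↦ ω ∧ α is surjective. -/
/-!
An alternating form of rank at most `2 r` is a sum of `r` elementary forms `f ⊗ g - g ⊗ f`
(split off one hyperbolic pair at a time). For the nondegenerate `ω` this yields `f i, g i`
(`i < m`) spanning `V*`, and since `Λ² V*` embeds into the bilinear forms,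
`Ω = ∑ i, f i ∧ g i`.

One then shows by induction on `r` that multiplication by `(∑_{i<r} f i ∧ g i) ^ s` maps degree
`k` onto degree `k + 2 s` of the algebra generated by the `f i, g i` (`i < r`) whenever
`r ≤ k + s`. With `A` the form on the first `r` pairs, `a = f r` and `b = g r`, every element is
`γ₀ + a γ₁ + b γ₂ + a b γ₃` with `γᵢ` in the smaller algebra, and
`(A + a b) ^ (s + 1) = A ^ (s + 1) + (s + 1) A ^ s a b`, so the four components can be solved
for with the induction hypothesis. The theorem is the case `s = 1`.
-/

/-- The alternating `2`-form `(φ, ψ) ↦ φ(v)ψ(w) - ψ(v)φ(w)` on the dual space, used to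
evaluate elements of `Λ² V*` against a pair of vectors `v, w ∈ V`. -/
noncomputable def evalPair {V : Type*} [AddCommGroup V] [Module ℝ V] (v w : V) :
    (Module.Dual ℝ V) [⋀^Fin 2]→ₗ[ℝ] ℝ :=
  MultilinearMap.alternatization
    ((MultilinearMap.mkPiAlgebra ℝ (Fin 2) ℝ).compLinearMap
      ![Module.Dual.eval ℝ V v, Module.Dual.eval ℝ V w])

/-- Evaluation of an element of the exterior algebra of `V*` (thought of in degree `2`) against
a pair of vectors `v, w ∈ V`; this realizes an element of `Λ² V*` as a bilinear form on `V`. -/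
noncomputable def asBilinForm {V : Type*} [AddCommGroup V] [Module ℝ V]
    (Ω : ExteriorAlgebra ℝ (Module.Dual ℝ V)) (v w : V) : ℝ :=
  ExteriorAlgebra.liftAlternating
    (fun i => match i with
      | 2 => evalPair v w
      | _ => 0) Ω

namespace Submodule

variable {R A : Type*} [CommSemiring R] [Semiring A] [Algebra R A] (X : Submodule R A)

/-- `X ^ d` in degree `d ≥ 0` and `⊥` in negative degree, so that degree shifts such as
`k - 1`, `k - 2` need no truncated subtraction. -/
def intPow : ℤ → Submodule R A
  | (n : ℕ) => X ^ n
  | .negSucc _ => ⊥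

@[simp] lemma intPow_natCast (n : ℕ) : X.intPow n = X ^ n := rfl

@[simp] lemma intPow_zero : X.intPow 0 = 1 := pow_zero X

@[simp] lemma intPow_one : X.intPow 1 = X := pow_one X

lemma intPow_of_neg {d : ℤ} (hd : d < 0) : X.intPow d = ⊥ := by
  cases d with
  | ofNat n => exact absurd hd (by simp)
  | negSucc n => rfl

lemma intPow_mul_le (i j : ℤ) : X.intPow i * X.intPow j ≤ X.intPow (i + j) := by
  cases i with
  | ofNat i =>
    cases j with
    | ofNat j => exact (pow_add X i j).ge
    | negSucc j => simp [intPow]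
  | negSucc i => simp [intPow]

variable {X}

lemma mul_mem_intPow {x y : A} {i j : ℤ} (hx : x ∈ X.intPow i) (hy : y ∈ X.intPow j) :
    x * y ∈ X.intPow (i + j) :=
  X.intPow_mul_le i j (mul_mem_mul hx hy)

lemma intPow_mono {Y : Submodule R A} (h : X ≤ Y) (d : ℤ) : X.intPow d ≤ Y.intPow d := by
  cases d with
  | ofNat n => exact pow_le_pow_left' h n
  | negSucc n => exact le_rfl

end Submodule

theorem Commute.add_pow_succ_of_mul_self_eq_zero {R : Type*} [Semiring R] {A B : R}
    (h : Commute A B) (hB : B * B = 0) (s : ℕ) :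
    (A + B) ^ (s + 1) = A ^ (s + 1) + (s + 1) • (A ^ s * B) := by
  induction s with
  | zero => simp
  | succ s ih =>
    rw [pow_succ _ (s + 1), ih, add_mul, mul_add, mul_add, smul_mul_assoc, smul_mul_assoc,
      mul_assoc (A ^ s) B A, ← h.eq, ← mul_assoc (A ^ s) A B, ← pow_succ, mul_assoc (A ^ s) B B, hB,
      mul_zero, smul_zero, add_zero, ← pow_succ, succ_nsmul _ (s + 1)]
    abel

theorem add_mul_pow_succ_mul {R : Type*} [Ring R] {A a b : R} (ha : Commute A a)
    (hb : Commute A b) (haa : a * a = 0) (hbb : b * b = 0) (hba : b * a = -(a * b)) (s : ℕ)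
    (α₀ α₁ α₂ α₃ : R) :
    (A + a * b) ^ (s + 1) * (α₀ + a * α₁ + b * α₂ + a * b * α₃) =
      A ^ (s + 1) * α₀ + a * (A ^ (s + 1) * α₁) + b * (A ^ (s + 1) * α₂) +
        a * b * (A ^ (s + 1) * α₃ + (s + 1) • (A ^ s * α₀)) := by
  have hAa : ∀ n x, A ^ n * (a * x) = a * (A ^ n * x) := fun n x => by
    rw [← mul_assoc, (ha.pow_left n).eq, mul_assoc]
  have hAb : ∀ n x, A ^ n * (b * x) = b * (A ^ n * x) := fun n x => by
    rw [← mul_assoc, (hb.pow_left n).eq, mul_assoc]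
  have haba : ∀ x, a * (b * (a * x)) = 0 := fun x => by
    rw [← mul_assoc b, hba, neg_mul, mul_neg, ← mul_assoc, ← mul_assoc, haa, zero_mul, zero_mul,
      neg_zero]
  have habb : ∀ x, a * (b * (b * x)) = 0 := fun x => by rw [← mul_assoc b, hbb, zero_mul, mul_zero]
  rw [(ha.mul_right hb).add_pow_succ_of_mul_self_eq_zero (by rw [mul_assoc, haba])]
  simp only [add_mul, mul_add, smul_mul_assoc, mul_smul_comm, mul_assoc, hAa, hAb, haba, habb,
    smul_zero, add_zero]
  abel

namespace ExteriorAlgebra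

open Submodule

section CommRing

variable {R M : Type*} [CommRing R] [AddCommGroup M] [Module R M]

lemma mul_ι_of_mem_range {x : ExteriorAlgebra R M} (hx : x ∈ LinearMap.range (ι R)) (v : M) :
    x * ι R v = -(ι R v * x) := by
  obtain ⟨u, rfl⟩ := hx
  exact eq_neg_of_add_eq_zero_left (ι_add_mul_swap u v)

lemma exists_eq_add_ι_mul_of_mem_intPow {X : Submodule R (ExteriorAlgebra R M)}
    (hX : X ≤ LinearMap.range (ι R)) (v : M) {d : ℤ} {γ : ExteriorAlgebra R M}
    (hγ : γ ∈ (X ⊔ R ∙ ι R v).intPow d) :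
    ∃ y₀ ∈ X.intPow d, ∃ y₁ ∈ X.intPow (d - 1), γ = y₀ + ι R v * y₁ := by
  rcases lt_or_ge d 0 with hd | hd
  · rw [intPow_of_neg _ hd, mem_bot] at hγ
    exact ⟨0, zero_mem _, 0, zero_mem _, by simp [hγ]⟩
  lift d to ℕ using hd
  induction d generalizing γ with
  | zero => exact ⟨γ, by simpa using hγ, 0, zero_mem _, by simp⟩
  | succ n ih =>
    rw [intPow_natCast, pow_succ'] at hγ
    induction hγ using Submodule.mul_induction_on' with
    | mem_mul_mem p hp q hq =>
      obtain ⟨y₀, hy₀, y₁, hy₁, rfl⟩ := ih hq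
      obtain ⟨x, hx, _, ht, rfl⟩ := mem_sup.1 hp
      obtain ⟨t, rfl⟩ := mem_span_singleton.1 ht
      refine ⟨x * y₀, ?_, t • y₀ - x * y₁, ?_, ?_⟩
      · simpa [add_comm] using mul_mem_intPow (i := 1) (by simpa using hx) hy₀
      · refine sub_mem (by simpa using smul_mem _ t hy₀) ?_
        simpa [add_comm] using mul_mem_intPow (i := 1) (by simpa using hx) hy₁
      · rw [add_mul, mul_add, mul_add, ← mul_assoc x, mul_ι_of_mem_range (hX hx), smul_mul_assoc,
          smul_mul_assoc, ← mul_assoc (ι R v) (ι R v), ι_sq_zero]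
        simp only [neg_mul, zero_mul, smul_zero, add_zero, mul_sub, mul_smul_comm, mul_assoc]
        abel
    | add p q _ _ hp hq =>
      obtain ⟨y₀, hy₀, y₁, hy₁, rfl⟩ := hp
      obtain ⟨z₀, hz₀, z₁, hz₁, rfl⟩ := hq
      exact ⟨y₀ + z₀, add_mem hy₀ hz₀, y₁ + z₁, add_mem hy₁ hz₁, by rw [mul_add]; abel⟩

variable (f g : ℕ → M)

def pairSpan : ℕ → Submodule R (ExteriorAlgebra R M)
  | 0 => ⊥
  | r + 1 => pairSpan r ⊔ R ∙ ι R (f r) ⊔ R ∙ ι R (g r)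

def wedgeSum (r : ℕ) : ExteriorAlgebra R M :=
  ∑ i ∈ Finset.range r, ι R (f i) * ι R (g i)

variable {f g}

lemma pairSpan_le_range_ι (r : ℕ) : pairSpan (R := R) f g r ≤ LinearMap.range (ι R) := by
  induction r with
  | zero => exact bot_le
  | succ r ih =>
    simp only [pairSpan, sup_le_iff, span_singleton_le_iff_mem, LinearMap.mem_range_self,
      and_true, ih]

lemma pairSpan_le_pairSpan_succ (r : ℕ) : pairSpan (R := R) f g r ≤ pairSpan f g (r + 1) :=
  le_sup_left.trans le_sup_left

lemma ι_mem_pairSpan {i r : ℕ} (h : i < r) :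
    ι R (f i) ∈ pairSpan f g r ∧ ι R (g i) ∈ pairSpan f g r := by
  induction r with
  | zero => omega
  | succ r ih =>
    rcases (Nat.lt_succ_iff.1 h).lt_or_eq with h | rfl
    · exact (ih h).imp (pairSpan_le_pairSpan_succ r ·) (pairSpan_le_pairSpan_succ r ·)
    · exact ⟨mem_sup_left (mem_sup_right (mem_span_singleton_self _)),
        mem_sup_right (mem_span_singleton_self _)⟩

lemma pairSpan_eq_range_ι {ω : M →ₗ[R] Module.Dual R M} (hω : Function.Surjective ω)
    {f g : ℕ → Module.Dual R M} {r : ℕ}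
    (hfg : ω = ∑ i ∈ Finset.range r, ((f i).smulRight (g i) - (g i).smulRight (f i))) :
    pairSpan f g r = LinearMap.range (ι R) := by
  refine le_antisymm (pairSpan_le_range_ι r) ?_
  rintro _ ⟨φ, rfl⟩
  obtain ⟨w, rfl⟩ := hω φ
  rw [hfg]
  simp only [LinearMap.sum_apply, LinearMap.sub_apply, LinearMap.smulRight_apply, map_sum,
    map_sub, map_smul]
  exact sum_mem fun i hi => sub_mem (smul_mem _ _ (ι_mem_pairSpan (Finset.mem_range.1 hi)).2)
    (smul_mem _ _ (ι_mem_pairSpan (Finset.mem_range.1 hi)).1)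

lemma wedgeSum_mem_pow_two (r : ℕ) : wedgeSum f g r ∈ pairSpan (R := R) f g r ^ 2 := by
  refine sum_mem fun i hi => ?_
  have hi := ι_mem_pairSpan (R := R) (f := f) (g := g) (Finset.mem_range.1 hi)
  exact pow_two (pairSpan (R := R) f g r) ▸ mul_mem_mul hi.1 hi.2

lemma wedgeSum_pow_mem_intPow (r s : ℕ) :
    wedgeSum f g r ^ s ∈ (pairSpan (R := R) f g r).intPow (2 * s) := by
  rw [show (2 * s : ℤ) = ((2 * s : ℕ) : ℤ) by push_cast; ring, intPow_natCast, pow_mul]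
  exact pow_mem_pow _ (wedgeSum_mem_pow_two r) s

lemma commute_wedgeSum_ι (r : ℕ) (v : M) : Commute (wedgeSum f g r) (ι R v) :=
  Commute.sum_left _ _ _ fun i _ => by
    change _ * _ * _ = _ * (_ * _)
    rw [mul_assoc, mul_ι_of_mem_range ⟨_, rfl⟩, mul_neg, ← mul_assoc,
      mul_ι_of_mem_range ⟨_, rfl⟩, neg_mul, neg_neg, mul_assoc]

lemma wedgeSum_succ (r : ℕ) :
    wedgeSum f g (r + 1) = wedgeSum (R := R) f g r + ι R (f r) * ι R (g r) :=
  Finset.sum_range_succ _ r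

lemma exists_decomp_of_mem_intPow_pairSpan_succ {r : ℕ} {d : ℤ} {γ : ExteriorAlgebra R M}
    (hγ : γ ∈ (pairSpan f g (r + 1)).intPow d) :
    ∃ γ₀ ∈ (pairSpan f g r).intPow d, ∃ γ₁ ∈ (pairSpan f g r).intPow (d - 1),
      ∃ γ₂ ∈ (pairSpan f g r).intPow (d - 1), ∃ γ₃ ∈ (pairSpan f g r).intPow (d - 2),
        γ = γ₀ + ι R (f r) * γ₁ + ι R (g r) * γ₂ + ι R (f r) * ι R (g r) * γ₃ := by
  have hX := pairSpan_le_range_ι (R := R) (f := f) (g := g) r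
  have hXa : pairSpan f g r ⊔ R ∙ ι R (f r) ≤ LinearMap.range (ι R) :=
    sup_le hX ((span_singleton_le_iff_mem _ _).2 (LinearMap.mem_range_self _ _))
  obtain ⟨y, hy, y', hy', rfl⟩ := exists_eq_add_ι_mul_of_mem_intPow hXa (g r) hγ
  obtain ⟨γ₀, hγ₀, γ₁, hγ₁, rfl⟩ := exists_eq_add_ι_mul_of_mem_intPow hX (f r) hy
  obtain ⟨γ₂, hγ₂, γ₃, hγ₃, rfl⟩ := exists_eq_add_ι_mul_of_mem_intPow hX (f r) hy'
  refine ⟨γ₀, hγ₀, γ₁, hγ₁, γ₂, hγ₂, -γ₃,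
    by simpa [sub_sub, one_add_one_eq_two] using neg_mem hγ₃, ?_⟩
  rw [mul_add, ← mul_assoc, mul_ι_of_mem_range (LinearMap.mem_range_self _ _), mul_neg, neg_mul]
  abel

lemma intPow_pairSpan_eq_bot {r : ℕ} {d : ℤ} (h : 2 * r < d) :
    (pairSpan (R := R) f g r).intPow d = ⊥ := by
  induction r generalizing d with
  | zero =>
    lift d to ℕ using (by omega)
    simpa [pairSpan] using zero_pow (M₀ := Submodule R (ExteriorAlgebra R M)) (by omega : d ≠ 0)
  | succ r ih =>
    refine eq_bot_iff.2 fun γ hγ => ?_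
    obtain ⟨γ₀, hγ₀, γ₁, hγ₁, γ₂, hγ₂, γ₃, hγ₃, rfl⟩ :=
      exists_decomp_of_mem_intPow_pairSpan_succ hγ
    rw [ih (by omega), mem_bot] at hγ₀ hγ₁ hγ₂ hγ₃
    simp [hγ₀, hγ₁, hγ₂, hγ₃]

end CommRing

variable {K M : Type*} [Field K] [CharZero K] [AddCommGroup M] [Module K M] {f g : ℕ → M}

lemma exists_wedgeSum_succ_pow_succ_mul_eq {r : ℕ}
    (ih : ∀ (s : ℕ) (k : ℤ), r ≤ k + s → ∀ γ ∈ (pairSpan f g r).intPow (k + 2 * s),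
      ∃ α ∈ (pairSpan f g r).intPow k, wedgeSum (R := K) f g r ^ s * α = γ)
    {s : ℕ} {k : ℤ} (h : r + 1 ≤ k + (s + 1)) {γ : ExteriorAlgebra K M}
    (hγ : γ ∈ (pairSpan f g (r + 1)).intPow (k + 2 * (s + 1))) :
    ∃ α ∈ (pairSpan f g (r + 1)).intPow k, wedgeSum f g (r + 1) ^ (s + 1) * α = γ := by
  obtain ⟨γ₀, hγ₀, γ₁, hγ₁, γ₂, hγ₂, γ₃, hγ₃, rfl⟩ := exists_decomp_of_mem_intPow_pairSpan_succ hγ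
  obtain ⟨α₁, hα₁, rfl⟩ := ih (s + 1) (k - 1) (by push_cast; omega) γ₁
    (by convert hγ₁ using 2; push_cast; ring)
  obtain ⟨α₂, hα₂, rfl⟩ := ih (s + 1) (k - 1) (by push_cast; omega) γ₂
    (by convert hγ₂ using 2; push_cast; ring)
  obtain ⟨δ, hδ, rfl⟩ := ih s k (by omega) γ₃ (by convert hγ₃ using 2; ring)
  set A := wedgeSum (R := K) f g r
  -- The `1`-component `α₀` has to satisfy both `A ^ (s + 1) α₀ = γ₀` and
  -- `(s + 1) A ^ s α₀ = A ^ s δ - A ^ (s + 1) α₃`; solving `A ^ (s + 2) α₃ = ρ` below makes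
  -- `α₀ = (δ - A α₃) / (s + 1)` do both.
  have hρ : A ^ (s + 1) * δ - (s + 1 : K) • γ₀ ∈
      (pairSpan f g r).intPow ((k - 2) + 2 * ↑(s + 2)) := by
    refine sub_mem ?_ (smul_mem _ _ (by convert hγ₀ using 2; push_cast; ring))
    have h := mul_mem_intPow (wedgeSum_pow_mem_intPow r (s + 1)) hδ
    rwa [show 2 * ((s + 1 : ℕ) : ℤ) + k = k - 2 + 2 * ((s + 2 : ℕ) : ℤ) by push_cast; ring] at h
  obtain ⟨α₃, hα₃, hα₃ρ⟩ := ih (s + 2) (k - 2) (by push_cast; omega) _ hρ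
  refine ⟨(s + 1 : K)⁻¹ • (δ - A * α₃) + ι K (f r) * α₁ + ι K (g r) * α₂ +
    ι K (f r) * ι K (g r) * α₃, ?_, ?_⟩
  · have hX := intPow_mono (pairSpan_le_pairSpan_succ (R := K) (f := f) (g := g) r)
    have hab := ι_mem_pairSpan (R := K) (f := f) (g := g) (Nat.lt_succ_self r)
    have ha : ι K (f r) ∈ (pairSpan f g (r + 1)).intPow 1 := by simpa using hab.1
    have hb : ι K (g r) ∈ (pairSpan f g (r + 1)).intPow 1 := by simpa using hab.2
    have hA : A ∈ (pairSpan f g r).intPow 2 := by simpa using wedgeSum_pow_mem_intPow r 1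
    refine add_mem (add_mem (add_mem ?_ ?_) ?_) ?_
    · exact hX k (smul_mem _ _ (sub_mem hδ (by simpa using mul_mem_intPow hA hα₃)))
    · simpa using mul_mem_intPow ha (hX _ hα₁)
    · simpa using mul_mem_intPow hb (hX _ hα₂)
    · simpa [one_add_one_eq_two] using mul_mem_intPow (mul_mem_intPow ha hb) (hX _ hα₃)
  · have hs : (s + 1 : K) ≠ 0 := Nat.cast_add_one_ne_zero s
    have h₀ : A ^ (s + 1) * ((s + 1 : K)⁻¹ • (δ - A * α₃)) = γ₀ := by
      rw [mul_smul_comm, mul_sub, ← mul_assoc, ← pow_succ, hα₃ρ, sub_sub_cancel,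
        inv_smul_smul₀ hs]
    have h₃ : A ^ (s + 1) * α₃ + (s + 1) • (A ^ s * ((s + 1 : K)⁻¹ • (δ - A * α₃))) =
        A ^ s * δ := by
      rw [← Nat.cast_smul_eq_nsmul K, Nat.cast_succ, mul_smul_comm, smul_inv_smul₀ hs, mul_sub,
        ← mul_assoc, ← pow_succ, add_sub_cancel]
    rw [wedgeSum_succ, add_mul_pow_succ_mul (commute_wedgeSum_ι r _) (commute_wedgeSum_ι r _)
      (ι_sq_zero _) (ι_sq_zero _) (mul_ι_of_mem_range ⟨_, rfl⟩ _), h₀, h₃]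

theorem exists_wedgeSum_pow_mul_eq {r s : ℕ} {k : ℤ} (h : r ≤ k + s) {γ : ExteriorAlgebra K M}
    (hγ : γ ∈ (pairSpan f g r).intPow (k + 2 * s)) :
    ∃ α ∈ (pairSpan f g r).intPow k, wedgeSum f g r ^ s * α = γ := by
  induction r generalizing s k γ with
  | zero =>
    rcases s with _ | s
    · exact ⟨γ, by simpa using hγ, by simp⟩
    · rw [intPow_pairSpan_eq_bot (by push_cast at h ⊢; omega), mem_bot] at hγ
      exact ⟨0, zero_mem _, by simp [hγ]⟩
  | succ r ih =>
    rcases s with _ | s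
    · exact ⟨γ, by simpa using hγ, by simp⟩
    · exact exists_wedgeSum_succ_pow_succ_mul_eq (fun s k h γ hγ => ih h hγ)
        (by push_cast at h ⊢; omega) (by simpa using hγ)

end ExteriorAlgebra

namespace LinearMap

variable {K V : Type*} [Field K] [AddCommGroup V] [Module K V] [FiniteDimensional K V]
  {ω : V →ₗ[K] V →ₗ[K] K}

lemma IsAlt.finrank_range_sub_smulRight_add_two_le (hω : ω.IsAlt) {u v : V} (huv : ω u v = 1) :
    Module.finrank K (range (ω - ((ω u).smulRight (ω v) - (ω v).smulRight (ω u)))) + 2 ≤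
      Module.finrank K (range ω) := by
  set ω' := ω - ((ω u).smulRight (ω v) - (ω v).smulRight (ω u))
  set S := Submodule.span K (Set.range ![ω u, ω v])
  have hvu : ω v u = -1 := by rw [← hω.neg, huv]
  have hS : LinearIndependent K ![ω u, ω v] := by
    refine LinearIndependent.pair_iff.2 fun s t hst => ?_
    have hu := congr($hst u)
    have hv := congr($hst v)
    simp [hω.self_eq_zero, huv, hvu] at hu hv
    exact ⟨hv, hu⟩
  have hrange : range ω' ≤ range ω := by
    rintro _ ⟨w, rfl⟩
    refine ⟨w - ω u w • v + ω v w • u, ?_⟩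
    simp [ω']
    abel
  have hspan : S ≤ range ω := by
    rw [Submodule.span_le, Matrix.range_cons, Matrix.range_cons, Matrix.range_empty]
    simp [Set.insert_subset_iff]
  -- Every form in `range ω'` vanishes at `u` and `v`, while a combination of `ω u` and `ω v`
  -- is determined by its values there.
  have hdisj : range ω' ⊓ S = ⊥ := by
    refine (Submodule.eq_bot_iff _).2 fun φ ⟨⟨w, hw⟩, hφ⟩ => ?_
    obtain ⟨c, rfl⟩ := Submodule.mem_span_range_iff_exists_fun K |>.1 hφ
    have hu := congr($hw u)
    have hv := congr($hw v)
    simp [ω', Fin.sum_univ_two, hω.self_eq_zero, huv, hvu, ← hω.neg w] at hu hv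
    simp [Fin.sum_univ_two, hu, ← hv]
  have h := Submodule.finrank_sup_add_finrank_inf_eq (range ω') S
  rw [hdisj, finrank_bot, add_zero, finrank_span_eq_card hS, Fintype.card_fin] at h
  exact h ▸ Submodule.finrank_mono (sup_le hrange hspan)

theorem IsAlt.exists_eq_sum_smulRight_sub_smulRight (hω : ω.IsAlt) {r : ℕ}
    (hr : Module.finrank K (range ω) ≤ 2 * r) :
    ∃ f g : ℕ → Module.Dual K V,
      ω = ∑ i ∈ Finset.range r, ((f i).smulRight (g i) - (g i).smulRight (f i)) := by
  induction r generalizing ω with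
  | zero =>
    refine ⟨0, 0, ?_⟩
    simpa [range_eq_bot] using hr
  | succ r ih =>
    by_cases hω0 : ω = 0
    · exact ⟨0, 0, hω0 ▸ (Finset.sum_eq_zero fun i _ => by ext; simp).symm⟩
    obtain ⟨u, w, huw⟩ : ∃ u w, ω u w ≠ 0 := by
      by_contra! h
      exact hω0 (ext₂ h)
    set v := (ω u w)⁻¹ • w
    have huv : ω u v = 1 := by simp [v, huw]
    have hω' : (ω - ((ω u).smulRight (ω v) - (ω v).smulRight (ω u))).IsAlt := by
      intro x
      simp [hω.self_eq_zero, mul_comm]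
    have hrank := hω.finrank_range_sub_smulRight_add_two_le huv
    obtain ⟨f, g, hfg⟩ := ih hω' (by omega)
    refine ⟨Function.update f r (ω u), Function.update g r (ω v), ?_⟩
    rw [Finset.sum_range_succ, Finset.sum_congr rfl fun i hi => by
      rw [Function.update_of_ne (Finset.mem_range.1 hi).ne,
        Function.update_of_ne (Finset.mem_range.1 hi).ne], ← hfg]
    simp only [Function.update_self]
    ext
    simp

end LinearMap

theorem exteriorPower.pairingDual_injective {K M : Type*} [Field K] [AddCommGroup M]
    [Module K M] [FiniteDimensional K M] (n : ℕ) :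
    Function.Injective (exteriorPower.pairingDual K M n) := by
  let b := Module.finBasis K M
  refine LinearMap.injective_of_linearIndependent (b.dualBasis.exteriorPower n).span_eq ?_
  have h : exteriorPower.pairingDual K M n ∘ b.dualBasis.exteriorPower n =
      (b.exteriorPower n).dualBasis := by
    ext1 s
    rw [Module.Basis.coe_dualBasis, exteriorPower.basis_coord, Function.comp_apply,
      exteriorPower.basis_apply, Module.Basis.coe_dualBasis]
    rfl
  rw [h]
  exact Module.Basis.linearIndependent _

section asBilinForm

open ExteriorAlgebra

variable {V : Type*} [AddCommGroup V] [Module ℝ V]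

lemma evalPair_apply (x : Fin 2 → V) (φ : Fin 2 → Module.Dual ℝ V) :
    evalPair (x 0) (x 1) φ = (Matrix.of fun i j => φ j (x i)).det := by
  rw [← Matrix.det_transpose, Matrix.det_apply]
  simp [evalPair, MultilinearMap.alternatization_apply, Fin.prod_univ_two]

lemma asBilinForm_ιMulti (x : Fin 2 → V) (φ : Fin 2 → Module.Dual ℝ V) :
    asBilinForm (ιMulti ℝ 2 φ) (x 0) (x 1) = (Matrix.of fun i j => φ j (x i)).det := by
  rw [asBilinForm, liftAlternating_apply_ιMulti]
  exact evalPair_apply x φ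

lemma asBilinForm_ι_mul_ι (φ ψ : Module.Dual ℝ V) (v w : V) :
    asBilinForm (ι ℝ φ * ι ℝ ψ) v w = φ v * ψ w - ψ v * φ w := by
  have h := asBilinForm_ιMulti ![v, w] ![φ, ψ]
  simp only [ιMulti_apply, List.ofFn_succ, List.ofFn_zero, List.prod_cons, List.prod_nil] at h
  rw [Matrix.det_fin_two] at h
  simpa using h

lemma asBilinForm_wedgeSum (f g : ℕ → Module.Dual ℝ V) (r : ℕ) (v w : V) :
    asBilinForm (wedgeSum f g r) v w =
      ∑ i ∈ Finset.range r, (f i v * g i w - g i v * f i w) := by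
  simp only [wedgeSum, ← asBilinForm_ι_mul_ι]
  exact map_sum _ _ _

lemma asBilinForm_eq_pairingDual (ξ : ⋀[ℝ]^2 (Module.Dual ℝ V)) (x : Fin 2 → V) :
    asBilinForm (ξ : ExteriorAlgebra ℝ (Module.Dual ℝ V)) (x 0) (x 1) =
      exteriorPower.pairingDual ℝ V 2 ξ (exteriorPower.ιMulti ℝ 2 x) := by
  let L : ⋀[ℝ]^2 (Module.Dual ℝ V) →ₗ[ℝ] ℝ := (liftAlternating fun i => match i with
      | 2 => evalPair (x 0) (x 1)
      | _ => 0) ∘ₗ (⋀[ℝ]^2 (Module.Dual ℝ V)).subtype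
  change L ξ = (LinearMap.applyₗ (exteriorPower.ιMulti ℝ 2 x) ∘ₗ exteriorPower.pairingDual ℝ V 2) ξ
  congr 1
  refine LinearMap.ext_on_range (exteriorPower.ιMulti_span ℝ 2 _) fun φ => ?_
  change asBilinForm (ιMulti ℝ 2 φ) (x 0) (x 1) = _
  rw [asBilinForm_ιMulti]
  simp

lemma eq_of_asBilinForm_eq [FiniteDimensional ℝ V] {ξ ζ : ⋀[ℝ]^2 (Module.Dual ℝ V)}
    (h : ∀ v w, asBilinForm (ξ : ExteriorAlgebra ℝ (Module.Dual ℝ V)) v w =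
      asBilinForm (ζ : ExteriorAlgebra ℝ (Module.Dual ℝ V)) v w) : ξ = ζ := by
  refine exteriorPower.pairingDual_injective 2 <|
    LinearMap.ext_on_range (exteriorPower.ιMulti_span ℝ 2 V) fun x => ?_
  simpa only [asBilinForm_eq_pairingDual] using h (x 0) (x 1)

end asBilinForm

open ExteriorAlgebra in
theorem wedge_mul_surjective_of_ge_general {V : Type*} [AddCommGroup V] [Module ℝ V]
    [FiniteDimensional ℝ V] (m : ℕ)
    (hdim : Module.finrank ℝ V = 2 * m)
    (ω : V →ₗ[ℝ] V →ₗ[ℝ] ℝ)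
    (halt : ∀ v : V, ω v v = 0)
    (hnondeg : ∀ v : V, (∀ w : V, ω v w = 0) → v = 0)
    (Ω : ⋀[ℝ]^2 (Module.Dual ℝ V))
    (hΩ : ∀ v w : V, asBilinForm (Ω : ExteriorAlgebra ℝ (Module.Dual ℝ V)) v w = ω v w)
    (k : ℕ) (hk : m - 1 ≤ k) :
    ∀ γ : ⋀[ℝ]^(k + 2) (Module.Dual ℝ V), ∃ α : ⋀[ℝ]^k (Module.Dual ℝ V),
      (Ω : ExteriorAlgebra ℝ (Module.Dual ℝ V)) * (α : ExteriorAlgebra ℝ (Module.Dual ℝ V))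
        = (γ : ExteriorAlgebra ℝ (Module.Dual ℝ V)) := by
  intro γ
  have hrank : Module.finrank ℝ (LinearMap.range ω) ≤ 2 * m :=
    hdim ▸ Subspace.dual_finrank_eq (K := ℝ) (V := V) ▸ Submodule.finrank_le _
  obtain ⟨f, g, hfg⟩ := LinearMap.IsAlt.exists_eq_sum_smulRight_sub_smulRight halt hrank
  have hsurj : Function.Surjective ω :=
    (LinearMap.injective_iff_surjective_of_finrank_eq_finrank Subspace.dual_finrank_eq.symm).1
      fun v w h => sub_eq_zero.1 (hnondeg _ fun u => by simp [h])
  have hι := pairSpan_eq_range_ι hsurj hfg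
  have hΩ' : (Ω : ExteriorAlgebra ℝ (Module.Dual ℝ V)) = wedgeSum f g m := by
    have hmem : wedgeSum f g m ∈ ⋀[ℝ]^2 (Module.Dual ℝ V) := by
      rw [exteriorPower, ← hι]
      exact wedgeSum_mem_pow_two m
    refine congrArg Subtype.val (eq_of_asBilinForm_eq (ζ := ⟨_, hmem⟩) fun v w => ?_)
    simp [hΩ, asBilinForm_wedgeSum, hfg]
  obtain ⟨α, hα, hαγ⟩ := exists_wedgeSum_pow_mul_eq (f := f) (g := g) (r := m) (s := 1) (k := k)
    (by omega) (γ := (γ : ExteriorAlgebra ℝ (Module.Dual ℝ V)))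
    (by rw [hι, show (k : ℤ) + 2 * (1 : ℕ) = (k + 2 : ℕ) by push_cast; ring]; exact γ.2)
  exact ⟨⟨α, by rw [hι] at hα; exact hα⟩, by rw [hΩ', ← hαγ, pow_one]⟩

/-- if `dim V = 2m`, `m ≥ 1`, and `ω` is a nondegenerate alternating bilinear
form on `V` regarded as `Ω ∈ Λ²V*`, then for every `k ≥ m - 1` exterior multiplication
`ε(ω) : Λ^k V* → Λ^{k+2} V*`, `α ↦ ω ∧ α`, is surjective. -/
theorem wedge_mul_surjective_of_ge {V : Type*} [AddCommGroup V] [Module ℝ V]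
    [FiniteDimensional ℝ V] (m : ℕ) (hm : 1 ≤ m)
    (hdim : Module.finrank ℝ V = 2 * m)
    (ω : V →ₗ[ℝ] V →ₗ[ℝ] ℝ)
    (halt : ∀ v : V, ω v v = 0)
    (hnondeg : ∀ v : V, (∀ w : V, ω v w = 0) → v = 0)
    (Ω : ⋀[ℝ]^2 (Module.Dual ℝ V))
    (hΩ : ∀ v w : V, asBilinForm (Ω : ExteriorAlgebra ℝ (Module.Dual ℝ V)) v w = ω v w)
    (k : ℕ) (hk : m - 1 ≤ k) :
    ∀ γ : ⋀[ℝ]^(k + 2) (Module.Dual ℝ V), ∃ α : ⋀[ℝ]^k (Module.Dual ℝ V),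
      (Ω : ExteriorAlgebra ℝ (Module.Dual ℝ V)) * (α : ExteriorAlgebra ℝ (Module.Dual ℝ V))
        = (γ : ExteriorAlgebra ℝ (Module.Dual ℝ V)) :=
  wedge_mul_surjective_of_ge_general m hdim ω halt hnondeg Ω hΩ k hk
end

section
/- Let V be a finite-dimensional real vector space, let θ be a nonzero linear functional on V, set H = ker θ, and let ω be an alternating bilinear form on V whose restriction to H × H is nondegenerate. Then there exists a unique vector X₀ ∈ V such that θ(X₀) = 1 and ω(X₀, v) = 0 for all v ∈ V. -/
/-!
Pick `e` with `θ e = 1`. Nondegeneracy of `ω` on `H = ker θ` makes `h ↦ ω h |_H` an isomorphism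
`H ≃ H*`, so some `h ∈ H` has `ω h = ω e` on `H`, and `X₀ = e - h` kills `H` under `ω X₀`.
Since also `ω X₀ X₀ = 0` and `V = ℝ X₀ ⊕ H`, the form `ω X₀` vanishes on all of `V`.
The difference of two such vectors lies in `H` and is `ω`-orthogonal to `H`, hence is zero.
-/

open LinearMap

namespace Module.Dual

variable {K V : Type*} [DivisionRing K] [AddCommGroup V] [Module K V]

theorem exists_apply_eq_one {θ : Dual K V} (hθ : θ ≠ 0) : ∃ e, θ e = 1 := by
  obtain ⟨u, hu⟩ := DFunLike.ne_iff.mp hθ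
  exact ⟨(θ u)⁻¹ • u, by simp [inv_mul_cancel₀ hu]⟩

theorem eq_zero_of_forall_ker_apply_eq_zero {θ f : Dual K V} {X : V} (hX : θ X ≠ 0)
    (hfX : f X = 0) (hker : ∀ w ∈ ker θ, f w = 0) : f = 0 := by
  ext v
  have hw : v - (θ v * (θ X)⁻¹) • X ∈ ker θ := by
    simp [mem_ker, mul_assoc, inv_mul_cancel₀ hX]
  calc f v = f (v - (θ v * (θ X)⁻¹) • X) + (θ v * (θ X)⁻¹) * f X := by simp
    _ = 0 := by rw [hker _ hw, hfX, mul_zero, add_zero]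

end Module.Dual

theorem LinearMap.exists_mem_forall_apply_eq_of_separatingLeft_restrict {K V : Type*} [Field K]
    [AddCommGroup V] [Module K V] {W : Submodule K V} [FiniteDimensional K W]
    {ω : V →ₗ[K] V →ₗ[K] K} (hω : ∀ v ∈ W, (∀ w ∈ W, ω v w = 0) → v = 0) (f : Module.Dual K V) :
    ∃ h ∈ W, ∀ w ∈ W, ω h w = f w := by
  set B : LinearMap.BilinForm K W := ω.compl₁₂ W.subtype W.subtype
  have hB : B.Nondegenerate := .ofSeparatingLeft fun x hx ↦
    Subtype.ext <| hω x x.2 fun w hw ↦ hx ⟨w, hw⟩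
  refine ⟨(B.toDual hB).symm (f ∘ₗ W.subtype), Submodule.coe_mem _, fun w hw ↦ ?_⟩
  exact LinearMap.BilinForm.apply_toDual_symm_apply (hB := hB) (f ∘ₗ W.subtype) ⟨w, hw⟩

/-- existence and uniqueness of the Reeb vector: let `V` be a finite-dimensional
real vector space, `θ` a nonzero linear functional on `V`, `H = ker θ`, and `ω` an alternating
bilinear form on `V` whose restriction to `H × H` is nondegenerate. Then there exists a unique
vector `X₀ ∈ V` such that `θ X₀ = 1` and `ω X₀ v = 0` for all `v ∈ V`. -/
theorem exists_unique_reeb_vector {V : Type*} [AddCommGroup V] [Module ℝ V]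
    [FiniteDimensional ℝ V]
    (θ : Module.Dual ℝ V) (hθ : θ ≠ 0)
    (ω : V →ₗ[ℝ] V →ₗ[ℝ] ℝ)
    (halt : ∀ v : V, ω v v = 0)
    (hnondeg : ∀ v ∈ LinearMap.ker θ, (∀ w ∈ LinearMap.ker θ, ω v w = 0) → v = 0) :
    ∃! X₀ : V, θ X₀ = 1 ∧ ∀ v : V, ω X₀ v = 0 := by
  obtain ⟨e, he⟩ := Module.Dual.exists_apply_eq_one hθ
  obtain ⟨h, hh, hωh⟩ := exists_mem_forall_apply_eq_of_separatingLeft_restrict hnondeg (ω e)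
  have hX : θ (e - h) = 1 := by simpa [he] using mem_ker.mp hh
  have hXker : ∀ w ∈ ker θ, ω (e - h) w = 0 := fun w hw ↦ by simp [hωh w hw]
  refine ⟨e - h, ⟨hX, fun v ↦ ?_⟩, fun Y ⟨hY, hωY⟩ ↦ ?_⟩
  · have hωX : ω (e - h) = 0 :=
      Module.Dual.eq_zero_of_forall_ker_apply_eq_zero (by simp [hX]) (halt _) hXker
    rw [hωX, LinearMap.zero_apply]
  · refine sub_eq_zero.mp <| hnondeg _ (by simp [hY, hX]) fun w hw ↦ ?_
    rw [map_sub, LinearMap.sub_apply, hωY, hXker w hw, sub_zero]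
end
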